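/- Let φ be an automorphism of a group H such that H has infinitely many φ-twisted conjugacy classes. Then the semidirect product H ⋊_φ ℤ does not have BVC. -/

import Mathlib

def IsVirtuallyCyclic (G : Type*) [Group G] : Prop :=
  ∃ H : Subgroup G, IsCyclic H ∧ H.FiniteIndex

def HasBVC (G : Type*) [Group G] : Prop :=
  ∃ S : Finset (Subgroup G), (∀ V ∈ S, IsVirtuallyCyclic V) ∧
    ∀ W : Subgroup G, IsVirtuallyCyclic W →
      ∃ V ∈ S, ∃ g : G, W.map (MulAut.conj g).toMonoidHom ≤ V

/-!
A homomorphism from a virtually cyclic group to a torsion-free group is trivial or has finite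
kernel, so its nontrivial fibres are finite. Hence the elements with `ℤ`-coordinate `1` in finitely
many virtually cyclic subgroups of `H ⋊_φ ℤ` have finitely many `H`-coordinates `a`, and some `h`
is twisted conjugate to none of them. But `⟨(h, 1)⟩` is conjugate into one of these subgroups,
so `(h, 1)` is conjugate to some `(a, 1)`; correcting the conjugator by a power of `(a, 1)` puts
it in `H`, and conjugacy by `x ∈ H` of `(a, 1)` and `(h, 1)` is twisted conjugacy of `a` and `h`.
-/

theorem IsVirtuallyCyclic.of_isCyclic (Γ : Type*) [Group Γ] [IsCyclic Γ] :
    IsVirtuallyCyclic Γ :=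
  ⟨⊤, inferInstance, inferInstance⟩

namespace IsVirtuallyCyclic

variable {Γ M : Type*} [Group Γ] [Group M] [IsMulTorsionFree M]

theorem finite_ker (hΓ : IsVirtuallyCyclic Γ) {ψ : Γ →* M} (hψ : ψ ≠ 1) : Finite ψ.ker := by
  obtain ⟨C, hC, hCfi⟩ := hΓ
  obtain ⟨c, hc⟩ := hC.exists_generator
  have mem_C {x : Γ} (hx : x ∈ C) : ∃ m : ℤ, (c : Γ) ^ m = x := by
    obtain ⟨m, hm⟩ := hc ⟨x, hx⟩
    exact ⟨m, congrArg Subtype.val hm⟩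
  -- some positive power of any `v` lies in `C`, so `ψ c = 1` would force `ψ v = 1` for all `v`
  have hψc : ψ c ≠ 1 := by
    intro hψc
    obtain ⟨v, hv⟩ := DFunLike.ne_iff.mp hψ
    obtain ⟨n, hn, -, hvn⟩ := C.exists_pow_mem_of_index_ne_zero hCfi.index_ne_zero v
    obtain ⟨m, hm⟩ := mem_C hvn
    refine hv ((pow_eq_one_iff_left hn.ne').mp ?_)
    rw [← map_pow, ← hm, map_zpow, hψc, one_zpow]
  have hdisj : C ⊓ ψ.ker = ⊥ := by
    refine (Subgroup.eq_bot_iff_forall _).mpr fun x hx ↦ ?_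
    obtain ⟨hxC, hxker⟩ := Subgroup.mem_inf.mp hx
    obtain ⟨m, rfl⟩ := mem_C hxC
    rw [MonoidHom.mem_ker, map_zpow, IsMulTorsionFree.zpow_eq_one_iff_right hψc] at hxker
    rw [hxker, zpow_zero]
  have hcard : Nat.card ψ.ker = C.relIndex ψ.ker := by
    rw [← Subgroup.inf_relIndex_right, hdisj, Subgroup.relIndex_bot_left]
  refine Nat.finite_of_card_ne_zero (hcard ▸ mt (Subgroup.relIndex_eq_zero_of_le_right le_top) ?_)
  rw [Subgroup.relIndex_top_right]
  exact hCfi.index_ne_zero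

theorem finite_preimage_singleton (hΓ : IsVirtuallyCyclic Γ) (ψ : Γ →* M) {y : M} (hy : y ≠ 1) :
    (ψ ⁻¹' {y}).Finite := by
  rcases (ψ ⁻¹' {y}).eq_empty_or_nonempty with hempty | ⟨v, hv⟩
  · exact hempty ▸ Set.finite_empty
  have := hΓ.finite_ker (ψ := ψ) fun h ↦ hy (by simpa [h] using hv.symm)
  refine ((ψ.ker : Set Γ).toFinite.image (v * ·)).subset fun x hx ↦ ⟨v⁻¹ * x, ?_, by group⟩
  rw [SetLike.mem_coe, MonoidHom.mem_ker, map_mul, map_inv, hv, hx, inv_mul_cancel]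

end IsVirtuallyCyclic

theorem finite_setOf_exists_mem_isVirtuallyCyclic {G M : Type*} [Group G] [Group M]
    [IsMulTorsionFree M] (S : Finset (Subgroup G)) (hS : ∀ V ∈ S, IsVirtuallyCyclic V)
    (ψ : G →* M) {y : M} (hy : y ≠ 1) : {g | ∃ V ∈ S, g ∈ V ∧ ψ g = y}.Finite :=
  (S.finite_toSet.biUnion fun V hV ↦
      ((hS V hV).finite_preimage_singleton (ψ.comp V.subtype) hy).image Subtype.val).subset
    fun g ⟨_, hV, hgV, hg⟩ ↦ Set.mem_biUnion hV ⟨⟨g, hgV⟩, hg, rfl⟩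

open Multiplicative SemidirectProduct

theorem SemidirectProduct.exists_left_eq_mul_mul_inv_of_conj {H : Type*} [Group H]
    {φ : MulAut H} {a b c : H ⋊[zpowersHom (MulAut H) φ] Multiplicative ℤ}
    (ha : a.right = ofAdd 1) (hb : b.right = ofAdd 1) (hc : c * a * c⁻¹ = b) :
    ∃ x, b.left = x * a.left * (φ x)⁻¹ := by
  -- multiplying `c` by a power of `a` keeps the conjugation but makes it an element of `H`
  set d := c * a ^ (-toAdd c.right)
  have hd_right : d.right = 1 := by
    change rightHom d = 1
    rw [map_mul, map_zpow, rightHom_eq_right, ha, ← Int.ofAdd_mul, one_mul, ofAdd_neg,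
      ofAdd_toAdd, mul_inv_cancel]
  have hd : d * a = b * d := by
    rw [← hc]; simp only [d]; group
  refine ⟨d.left, eq_mul_inv_of_mul_eq ?_⟩
  simpa [ha, hb, hd_right] using (congrArg left hd).symm

/-- If `H` has infinitely many `φ`-twisted conjugacy classes (i.e. no finite set of
elements meets every twisted conjugacy class), then `H ⋊_φ ℤ` does not have BVC. -/
theorem stmt_13 {H : Type*} [Group H] (φ : MulAut H)
    (hinf : ∀ S : Finset H, ∃ h : H, ∀ g ∈ S, ¬ ∃ x : H, h = x * g * (φ x)⁻¹) :
    ¬ HasBVC (H ⋊[zpowersHom (MulAut H) φ] Multiplicative ℤ) := by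
  rintro ⟨S, hS_vc, hS⟩
  set t : Multiplicative ℤ := ofAdd 1
  have ht : t ≠ 1 := by simp [t]
  have hF := (finite_setOf_exists_mem_isVirtuallyCyclic S hS_vc rightHom ht).image left
  obtain ⟨h, hh⟩ := hinf hF.toFinset
  obtain ⟨V, hVS, g, hgV⟩ := hS _ (.of_isCyclic (Subgroup.zpowers ⟨h, t⟩))
  set a := g * ⟨h, t⟩ * g⁻¹
  have haV : a ∈ V := hgV ⟨_, Subgroup.mem_zpowers _, rfl⟩
  have ha_right : a.right = t := mul_inv_cancel_comm _ _
  refine hh a.left (hF.mem_toFinset.mpr ⟨a, ⟨V, hVS, haV, ha_right⟩, rfl⟩) ?_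
  exact exists_left_eq_mul_mul_inv_of_conj (c := g⁻¹) (b := ⟨h, t⟩) ha_right rfl
    (by simp only [a]; group)
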